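/- Let 0 < α < 1/3. There exists a constant C > 0, depending only on α, such that for every integer M ≥ 1 and every real u with 0 ≤ u ≤ M^α: u³ ∫_0^{M^α} ⌊t^{1/α}⌋ / (t²(t² + u² + ut√2)) dt ≥ C [ (u^{1/α} − u)/(1 − α) + u³ (M^{1−3α} − max(u,1)^{1/α − 3})/(1 − 3α) ]. -/

import Mathlib

set_option maxHeartbeats 1000000

open MeasureTheory Set intervalIntegral

theorem lower_bound_integral_small_u (α : ℝ) (h1 : 0 < α) (h2 : α < 1 / 3) :
    ∃ C : ℝ, 0 < C ∧
      ∀ M : ℕ, 1 ≤ M → ∀ u : ℝ, 0 ≤ u → u ≤ (M : ℝ) ^ α →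
        C * ((u ^ (1 / α) - u) / (1 - α) +
            u ^ 3 * ((M : ℝ) ^ (1 - 3 * α) - (max u 1) ^ (1 / α - 3)) / (1 - 3 * α)) ≤
          u ^ 3 * ∫ x in (0 : ℝ)..((M : ℝ) ^ α),
            ((⌊x ^ (1 / α)⌋ : ℤ) : ℝ) /
              (x ^ 2 * (x ^ 2 + u ^ 2 + u * x * Real.sqrt 2)) := by
  have hα : α ≠ 0 := ne_of_gt h1
  set p : ℝ := 1 / α with hpdef
  have hp3 : 3 < p := by
    rw [hpdef, lt_div_iff₀ h1]; linarith
  have hp0 : 0 < p := by linarith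
  have hαp : α * p = 1 := by rw [hpdef]; field_simp
  refine ⟨α / 8, by positivity, ?_⟩
  intro M hM u hu huM
  set T : ℝ := (M : ℝ) ^ α with hTdef
  have hM1 : (1 : ℝ) ≤ (M : ℝ) := by exact_mod_cast hM
  have hT1 : (1 : ℝ) ≤ T := Real.one_le_rpow hM1 h1.le
  set v : ℝ := max u 1 with hvdef
  have hv1 : (1 : ℝ) ≤ v := le_max_right _ _
  have hv0 : (0 : ℝ) < v := by linarith
  have hvT : v ≤ T := max_le huM hT1
  have huv : u ≤ v := le_max_left _ _
  have hs2 : Real.sqrt 2 ≤ 2 := by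
    nlinarith [Real.sq_sqrt (by norm_num : (0:ℝ) ≤ 2), Real.sqrt_nonneg 2]
  have hs0 : 0 ≤ Real.sqrt 2 := Real.sqrt_nonneg 2
  set f : ℝ → ℝ := fun x =>
    ((⌊x ^ p⌋ : ℤ) : ℝ) / (x ^ 2 * (x ^ 2 + u ^ 2 + u * x * Real.sqrt 2)) with hfdef
  -- measurability
  have hmeas : Measurable f := by
    apply Measurable.div
    · exact measurable_from_top.comp ((Real.continuous_rpow_const hp0.le).measurable.floor)
    · fun_prop
  -- f vanishes on Ioo 0 1
  have hzero : ∀ x ∈ Ioo (0:ℝ) 1, f x = 0 := by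
    intro x hx
    have hfl : ⌊x ^ p⌋ = 0 := Int.floor_eq_zero_iff.mpr
      ⟨Real.rpow_nonneg hx.1.le p, Real.rpow_lt_one hx.1.le hx.2 hp0⟩
    simp [hfdef, hfl]
  have hne1 : ∀ᵐ x : ℝ, x ≠ (1:ℝ) := by
    rw [Filter.eventually_iff, mem_ae_iff]
    convert Real.volume_singleton (a := (1:ℝ)) using 2
    ext x; simp [not_not]
  -- integrability on [0,1]
  have hfeq : f =ᵐ[volume.restrict (Set.uIoc (0:ℝ) 1)] 0 := by
    rw [uIoc_of_le (by norm_num : (0:ℝ) ≤ 1)]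
    filter_upwards [ae_restrict_mem measurableSet_Ioc, ae_restrict_of_ae hne1] with x hx hx1
    exact hzero x ⟨hx.1, lt_of_le_of_ne hx.2 hx1⟩
  have h01 : IntervalIntegrable f volume 0 1 := by
    rw [intervalIntegrable_iff]
    exact (integrable_zero _ _ _).congr hfeq.symm
  -- integrability on [1,T]
  have h1T : IntervalIntegrable f volume 1 T := by
    refine (_root_.intervalIntegrable_const (c := T ^ p)).mono_fun'
      (hmeas.aestronglyMeasurable.restrict) ?_
    rw [uIoc_of_le hT1]
    filter_upwards [ae_restrict_mem measurableSet_Ioc] with x hx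
    have hx1 : (1:ℝ) ≤ x := hx.1.le
    have hx0 : (0:ℝ) < x := by linarith
    have hnum0 : (0:ℝ) ≤ ((⌊x ^ p⌋ : ℤ) : ℝ) := by
      have : (0:ℤ) ≤ ⌊x ^ p⌋ := Int.floor_nonneg.mpr (Real.rpow_nonneg hx0.le p)
      exact_mod_cast this
    have hxx : (1:ℝ) ≤ x ^ 2 := by nlinarith
    have hinner : x ^ 2 ≤ x ^ 2 + u ^ 2 + u * x * Real.sqrt 2 := by
      nlinarith [mul_nonneg (mul_nonneg hu hx0.le) hs0, sq_nonneg u]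
    have hden1 : (1:ℝ) ≤ x ^ 2 * (x ^ 2 + u ^ 2 + u * x * Real.sqrt 2) := by
      calc (1:ℝ) = 1 * 1 := by ring
        _ ≤ x ^ 2 * (x ^ 2 + u ^ 2 + u * x * Real.sqrt 2) :=
          mul_le_mul hxx (by linarith) (by norm_num) (by positivity)
    have hf0 : 0 ≤ f x := by
      apply div_nonneg hnum0; linarith
    have : f x ≤ ((⌊x ^ p⌋ : ℤ) : ℝ) := div_le_self hnum0 hden1
    have hfl : ((⌊x ^ p⌋ : ℤ) : ℝ) ≤ x ^ p := Int.floor_le _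
    have hxT : x ^ p ≤ T ^ p := Real.rpow_le_rpow hx0.le hx.2 hp0.le
    rw [Real.norm_eq_abs, abs_of_nonneg hf0]
    linarith
  have h1v : IntervalIntegrable f volume 1 v :=
    h1T.mono_set' (by rw [uIoc_of_le hv1, uIoc_of_le hT1]; exact Ioc_subset_Ioc le_rfl hvT)
  have hvTi : IntervalIntegrable f volume v T :=
    h1T.mono_set' (by rw [uIoc_of_le hvT, uIoc_of_le hT1]; exact Ioc_subset_Ioc hv1 le_rfl)
  -- floor lower bound
  have hfloor_half : ∀ y : ℝ, 1 ≤ y → y / 2 ≤ ((⌊y⌋ : ℤ) : ℝ) := by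
    intro y hy
    rcases le_or_gt y 2 with h | h
    · have : (1:ℤ) ≤ ⌊y⌋ := Int.le_floor.mpr (by exact_mod_cast hy)
      have : (1:ℝ) ≤ ((⌊y⌋ : ℤ) : ℝ) := by exact_mod_cast this
      linarith
    · have := Int.sub_one_lt_floor y
      linarith
  -- pointwise bound on [1, v]
  have hle1 : ∀ x ∈ Icc (1:ℝ) v, x ^ (p - 2) / (8 * v ^ 2) ≤ f x := by
    intro x hx
    have hx1 : (1:ℝ) ≤ x := hx.1
    have hx0 : (0:ℝ) < x := by linarith
    have hxp1 : (1:ℝ) ≤ x ^ p := Real.one_le_rpow hx1 hp0.le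
    have hnum : x ^ p / 2 ≤ ((⌊x ^ p⌋ : ℤ) : ℝ) := hfloor_half _ hxp1
    have hden : x ^ 2 * (x ^ 2 + u ^ 2 + u * x * Real.sqrt 2) ≤ x ^ 2 * (4 * v ^ 2) := by
      have hxv : x ≤ v := hx.2
      have h1 : u * x * Real.sqrt 2 ≤ 2 * v ^ 2 := by
        nlinarith [mul_le_mul (mul_le_mul huv hxv hx0.le hv0.le) hs2 hs0
          (by positivity : (0:ℝ) ≤ v * v)]
      have hxv2 : x ^ 2 ≤ v ^ 2 := by nlinarith
      have huv2 : u ^ 2 ≤ v ^ 2 := by nlinarith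
      have : x ^ 2 + u ^ 2 + u * x * Real.sqrt 2 ≤ 4 * v ^ 2 := by linarith
      exact mul_le_mul_of_nonneg_left this (by positivity)
    have hdpos : 0 < x ^ 2 * (x ^ 2 + u ^ 2 + u * x * Real.sqrt 2) := by
      have : (0:ℝ) < x ^ 2 + u ^ 2 + u * x * Real.sqrt 2 := by
        nlinarith [mul_nonneg (mul_nonneg hu hx0.le) hs0, sq_nonneg u]
      exact mul_pos (by positivity) this
    have key : x ^ p / 2 / (x ^ 2 * (4 * v ^ 2)) ≤ f x :=
      div_le_div₀ (by positivity) hnum hdpos hden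
    refine le_trans (le_of_eq ?_) key
    have hxp2 : x ^ (p - 2) = x ^ p / x ^ (2:ℕ) := by
      rw [← Real.rpow_natCast x 2, ← Real.rpow_sub hx0]
      norm_num
    have hxne : x ≠ 0 := hx0.ne'
    rw [hxp2]
    field_simp
    ring
  -- pointwise bound on [v, T]
  have hle2 : ∀ x ∈ Icc v T, x ^ (p - 4) / 8 ≤ f x := by
    intro x hx
    have hx1 : (1:ℝ) ≤ x := le_trans hv1 hx.1
    have hx0 : (0:ℝ) < x := by linarith
    have hxp1 : (1:ℝ) ≤ x ^ p := Real.one_le_rpow hx1 hp0.le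
    have hnum : x ^ p / 2 ≤ ((⌊x ^ p⌋ : ℤ) : ℝ) := hfloor_half _ hxp1
    have hux : u ≤ x := le_trans huv hx.1
    have hden : x ^ 2 * (x ^ 2 + u ^ 2 + u * x * Real.sqrt 2) ≤ x ^ 2 * (4 * x ^ 2) := by
      have h1 : u * x * Real.sqrt 2 ≤ 2 * x ^ 2 := by
        nlinarith [mul_le_mul (mul_le_mul hux le_rfl hx0.le hx0.le) hs2 hs0
          (by positivity : (0:ℝ) ≤ x * x)]
      have hux2 : u ^ 2 ≤ x ^ 2 := by nlinarith
      have : x ^ 2 + u ^ 2 + u * x * Real.sqrt 2 ≤ 4 * x ^ 2 := by linarith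
      exact mul_le_mul_of_nonneg_left this (by positivity)
    have hdpos : 0 < x ^ 2 * (x ^ 2 + u ^ 2 + u * x * Real.sqrt 2) := by
      have : (0:ℝ) < x ^ 2 + u ^ 2 + u * x * Real.sqrt 2 := by
        nlinarith [mul_nonneg (mul_nonneg hu hx0.le) hs0, sq_nonneg u]
      exact mul_pos (by positivity) this
    have key : x ^ p / 2 / (x ^ 2 * (4 * x ^ 2)) ≤ f x :=
      div_le_div₀ (by positivity) hnum hdpos hden
    refine le_trans (le_of_eq ?_) key
    have hxp4 : x ^ (p - 4) = x ^ p / x ^ (4:ℕ) := by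
      rw [← Real.rpow_natCast x 4, ← Real.rpow_sub hx0]
      norm_num
    have hxne : x ≠ 0 := hx0.ne'
    rw [hxp4]
    field_simp
    ring
  -- the three pieces
  have hI01 : (∫ x in (0:ℝ)..1, f x) = 0 := by
    have heq : (∫ x in (0:ℝ)..1, f x) = ∫ _x in (0:ℝ)..1, (0:ℝ) := by
      apply intervalIntegral.integral_congr_ae
      filter_upwards [hne1] with x hx1 hx
      rw [uIoc_of_le (by norm_num : (0:ℝ) ≤ 1)] at hx
      exact hzero x ⟨hx.1, lt_of_le_of_ne hx.2 hx1⟩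
    rw [heq, intervalIntegral.integral_zero]
  have hint1 : IntervalIntegrable (fun x : ℝ => x ^ (p - 2) / (8 * v ^ 2)) volume 1 v :=
    (intervalIntegrable_rpow (Or.inl (by linarith))).div_const _
  have hint2 : IntervalIntegrable (fun x : ℝ => x ^ (p - 4) / 8) volume v T :=
    (intervalIntegrable_rpow (Or.inr (Set.notMem_uIcc_of_lt (by linarith) (by linarith)))).div_const _
  have hI1v : (v ^ (p - 1) - 1) / (p - 1) / (8 * v ^ 2) ≤ ∫ x in (1:ℝ)..v, f x := by
    calc (v ^ (p - 1) - 1) / (p - 1) / (8 * v ^ 2)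
        = ∫ x in (1:ℝ)..v, x ^ (p - 2) / (8 * v ^ 2) := by
          rw [intervalIntegral.integral_div, integral_rpow (Or.inl (by linarith))]
          norm_num [show p - 2 + 1 = p - 1 by ring]
      _ ≤ ∫ x in (1:ℝ)..v, f x :=
          intervalIntegral.integral_mono_on hv1 hint1 h1v hle1
  have hIvT : (T ^ (p - 3) - v ^ (p - 3)) / (p - 3) / 8 ≤ ∫ x in v..T, f x := by
    calc (T ^ (p - 3) - v ^ (p - 3)) / (p - 3) / 8
        = ∫ x in v..T, x ^ (p - 4) / 8 := by
          rw [intervalIntegral.integral_div, integral_rpow (Or.inl (by linarith))]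
          norm_num [show p - 4 + 1 = p - 3 by ring]
      _ ≤ ∫ x in v..T, f x :=
          intervalIntegral.integral_mono_on hvT hint2 hvTi hle2
  have hsplit : (∫ x in (0:ℝ)..T, f x)
      = (∫ x in (0:ℝ)..1, f x) + (∫ x in (1:ℝ)..v, f x) + (∫ x in v..T, f x) := by
    rw [intervalIntegral.integral_add_adjacent_intervals h01 h1v,
      intervalIntegral.integral_add_adjacent_intervals (h01.trans h1v) hvTi]
  have hItot : (v ^ (p - 1) - 1) / (p - 1) / (8 * v ^ 2)
      + (T ^ (p - 3) - v ^ (p - 3)) / (p - 3) / 8 ≤ ∫ x in (0:ℝ)..T, f x := by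
    rw [hsplit, hI01]; linarith
  clear_value p T v f
  -- exponent rewrites
  have hMT : (M : ℝ) ^ (1 - 3 * α) = T ^ (p - 3) := by
    rw [hTdef, ← Real.rpow_mul (Nat.cast_nonneg M)]
    congr 1
    rw [mul_sub, hαp]; ring
  have h1α : 1 - α = α * (p - 1) := by rw [mul_sub, hαp]; ring
  have h3α : 1 - 3 * α = α * (p - 3) := by rw [mul_sub, hαp]; ring
  -- final algebra
  rw [hMT, h1α, h3α]
  have hu3 : (0:ℝ) ≤ u ^ 3 := by positivity
  have hmul := mul_le_mul_of_nonneg_left hItot hu3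
  have hp1ne : p - 1 ≠ 0 := ne_of_gt (by linarith)
  have hp3ne : p - 3 ≠ 0 := ne_of_gt (by linarith)
  -- key term comparison
  have hkey : (u ^ p - u) / (8 * (p - 1)) ≤ u ^ 3 * ((v ^ (p - 1) - 1) / (p - 1) / (8 * v ^ 2)) := by
    rcases le_or_gt u 1 with hu1 | hu1
    · have hv_eq : v = 1 := hvdef.trans (max_eq_right hu1)
      have hup : u ^ p ≤ u := by
        rcases eq_or_lt_of_le hu with h | h
        · rw [← h, Real.zero_rpow (by positivity : p ≠ 0)]
        · calc u ^ p ≤ u ^ (1:ℝ) :=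
                Real.rpow_le_rpow_of_exponent_ge h hu1 (by linarith)
            _ = u := Real.rpow_one u
      have hz : u ^ 3 * (((1:ℝ) ^ (p - 1) - 1) / (p - 1) / (8 * (1:ℝ) ^ 2)) = 0 := by
        rw [Real.one_rpow]; ring
      rw [hv_eq, hz, div_le_iff₀ (by nlinarith : (0:ℝ) < 8 * (p - 1))]
      nlinarith
    · have hv_eq : v = u := hvdef.trans (max_eq_left hu1.le)
      have hu0 : (0:ℝ) < u := by linarith
      have hup : u ^ p = u ^ (1:ℝ) * u ^ (p - 1) := by
        rw [← Real.rpow_add hu0]; norm_num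
      rw [Real.rpow_one] at hup
      rw [hv_eq]
      have hrw : u ^ 3 * ((u ^ (p - 1) - 1) / (p - 1) / (8 * u ^ 2))
          = (u ^ p - u) / (8 * (p - 1)) := by
        rw [hup]
        field_simp
      rw [hrw]
  calc α / 8 * ((u ^ p - u) / (α * (p - 1)) +
        u ^ 3 * (T ^ (p - 3) - v ^ (p - 3)) / (α * (p - 3)))
      = (u ^ p - u) / (8 * (p - 1))
        + u ^ 3 * ((T ^ (p - 3) - v ^ (p - 3)) / (p - 3) / 8) := by
        field_simp
    _ ≤ u ^ 3 * ((v ^ (p - 1) - 1) / (p - 1) / (8 * v ^ 2))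
        + u ^ 3 * ((T ^ (p - 3) - v ^ (p - 3)) / (p - 3) / 8) := by linarith
    _ = u ^ 3 * ((v ^ (p - 1) - 1) / (p - 1) / (8 * v ^ 2)
        + (T ^ (p - 3) - v ^ (p - 3)) / (p - 3) / 8) := by ring
    _ ≤ u ^ 3 * ∫ x in (0:ℝ)..T, f x := hmul
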